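/- arXiv:2401.11961 — 2 statements merged into one kernel-verified Lean document; each statement's English description precedes it below -/
import Mathlib

section
/- Let θ : ℝ → ℝ be continuously differentiable with θ(t₀) ≥ 0, and suppose there is a locally Lipschitz, strictly increasing function α : ℝ → ℝ with α(0) = 0 such that θ'(t) + α(θ(t)) ≥ 0 for all t ≥ t₀. Then θ(t) ≥ 0 for all t ≥ t₀. -/
theorem barrier_forward_invariance (θ : ℝ → ℝ) (α : ℝ → ℝ) (t₀ : ℝ)
    (hθ : ContDiff ℝ 1 θ) (hα : LocallyLipschitz α) (hmono : StrictMono α)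
    (h0 : α 0 = 0) (hbar : ∀ t ≥ t₀, deriv θ t + α (θ t) ≥ 0)
    (hinit : θ t₀ ≥ 0) : ∀ t ≥ t₀, θ t ≥ 0 := by
  intro t₁ ht₁
  by_contra h
  push_neg at h
  set S := {t | t ∈ Set.Icc t₀ t₁ ∧ θ t ≥ 0} with hS
  have hSne : S.Nonempty := ⟨t₀, ⟨le_refl _, ht₁⟩, hinit⟩
  have hScl : IsClosed S := by
    have hEq : S = Set.Icc t₀ t₁ ∩ θ ⁻¹' Set.Ici 0 := by
      ext t; simp [hS, Set.mem_Icc]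
    rw [hEq]
    exact isClosed_Icc.inter (isClosed_Ici.preimage hθ.continuous)
  have hSbdd : BddAbove S := ⟨t₁, fun t ht => ht.1.2⟩
  set s := sSup S with hs
  have hsS : s ∈ S := hScl.csSup_mem hSne hSbdd
  have hs0 : θ s ≥ 0 := hsS.2
  have hst₀ : t₀ ≤ s := hsS.1.1
  have hst₁ : s ≤ t₁ := hsS.1.2
  have hslt : s < t₁ := lt_of_le_of_ne hst₁ (fun he => by rw [he] at hs0; linarith)
  have hneg : ∀ t, s < t → t ≤ t₁ → θ t < 0 := by
    intro t hts htt₁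
    by_contra hc
    push_neg at hc
    have hmem : t ∈ S := ⟨⟨le_trans hst₀ hts.le, htt₁⟩, hc⟩
    exact absurd (le_csSup hSbdd hmem) (not_le.mpr hts)
  have hmonoθ : StrictMonoOn θ (Set.Icc s t₁) := by
    apply strictMonoOn_of_deriv_pos (convex_Icc s t₁) hθ.continuous.continuousOn
    intro t ht
    rw [interior_Icc] at ht
    have h1 : θ t < 0 := hneg t ht.1 ht.2.le
    have h2 : α (θ t) < 0 := by
      calc α (θ t) < α 0 := hmono h1
        _ = 0 := h0
    have h3 := hbar t (le_trans hst₀ ht.1.le)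
    linarith
  have := hmonoθ ⟨le_refl s, hslt.le⟩ ⟨hslt.le, le_refl t₁⟩ hslt
  linarith
end

section
/- In the ACC model, suppose v(t) + d₁ > 0 and z(t) - a₀ > 0 (the system is strictly inside the safe set and Assumption 2 holds). Then L_Ĝ Θ(ζ(t)) = -((Θ(ζ)+1)·θ(ζ)·(v(t)+d₁)) / ((‖ζ+d‖+r)²·‖ζ+d‖·M) < 0, where M > 0 is the vehicle mass, θ(ζ) = z - a₀, and Θ is the NCBF. -/
theorem acc_LG_theta_negative (v z d₁ d₂ r Δ M a₀ : ℝ)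
    (hM : M > 0) (hr : r > 0) (hΔ : Δ > 0) (hv : v + d₁ > 0) (hz : z - a₀ > 0) :
    deriv (fun v' => Real.exp ((z - a₀) /
        (Real.sqrt ((v' + d₁) ^ 2 + (z + d₂) ^ 2) + r) - Δ) - 1) v * (1 / M) =
      -(((Real.exp ((z - a₀) / (Real.sqrt ((v + d₁) ^ 2 + (z + d₂) ^ 2) + r) - Δ) - 1) + 1) *
          (z - a₀) * (v + d₁)) /
        ((Real.sqrt ((v + d₁) ^ 2 + (z + d₂) ^ 2) + r) ^ 2 *
          Real.sqrt ((v + d₁) ^ 2 + (z + d₂) ^ 2) * M) ∧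
    deriv (fun v' => Real.exp ((z - a₀) /
        (Real.sqrt ((v' + d₁) ^ 2 + (z + d₂) ^ 2) + r) - Δ) - 1) v * (1 / M) < 0 := by
  set s := Real.sqrt ((v + d₁) ^ 2 + (z + d₂) ^ 2) with hs
  have hspos : 0 < s := Real.sqrt_pos.mpr (by positivity)
  have hne : (v + d₁) ^ 2 + (z + d₂) ^ 2 ≠ 0 := by positivity
  have hsr : s + r ≠ 0 := by positivity
  have h1 : HasDerivAt (fun v' : ℝ => (v' + d₁) ^ 2 + (z + d₂) ^ 2)
      (2 * (v + d₁)) v := by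
    have := ((hasDerivAt_id v).add_const d₁).pow 2
    simpa using this.add_const ((z + d₂) ^ 2)
  have h2 : HasDerivAt (fun v' : ℝ => Real.sqrt ((v' + d₁) ^ 2 + (z + d₂) ^ 2))
      (2 * (v + d₁) / (2 * s)) v := h1.sqrt hne
  have h3 := h2.add_const r
  have h4 := (hasDerivAt_const v (z - a₀)).div h3 hsr
  have h5 := h4.sub_const Δ
  have h6 := h5.exp
  have h7 := h6.sub_const 1
  have hder : deriv (fun v' => Real.exp ((z - a₀) /
      (Real.sqrt ((v' + d₁) ^ 2 + (z + d₂) ^ 2) + r) - Δ) - 1) v =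
      Real.exp ((z - a₀) / (s + r) - Δ) *
        ((0 * (s + r) - (z - a₀) * (2 * (v + d₁) / (2 * s))) / (s + r) ^ 2) := h7.deriv
  constructor
  · rw [hder]
    field_simp
    ring
  · rw [hder]
    have hexp : 0 < Real.exp ((z - a₀) / (s + r) - Δ) := Real.exp_pos _
    have hnum : (0 * (s + r) - (z - a₀) * (2 * (v + d₁) / (2 * s))) / (s + r) ^ 2 < 0 := by
      apply div_neg_of_neg_of_pos
      · have : 0 < (z - a₀) * (2 * (v + d₁) / (2 * s)) := by positivity
        linarith
      · positivity
    have : Real.exp ((z - a₀) / (s + r) - Δ) *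
        ((0 * (s + r) - (z - a₀) * (2 * (v + d₁) / (2 * s))) / (s + r) ^ 2) < 0 :=
      mul_neg_of_pos_of_neg hexp hnum
    have hM' : 0 < 1 / M := by positivity
    exact mul_neg_of_neg_of_pos this hM'
end
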